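/- arXiv:1504.06454 — 6 statements merged into one kernel-verified Lean document; each statement's English description precedes it below -/
import Mathlib

section
/- A finite simple graph G=(V,E) is a threshold tolerance graph if and only if there exist functions g,t : V → ℕ taking only positive integer values such that for all distinct x,y ∈ V, {x,y} ∈ E if and only if g(x) + g(y) ≥ min(t(x), t(y)). (Lemma 1.) -/
/-- `G` is a threshold tolerance graph: each vertex gets a positive weight `g v` and a
positive tolerance `t v`, and two distinct vertices are adjacent iff the sum of their
weights is at least the minimum of their tolerances. -/
def IsThresholdToleranceGraph {V : Type} [Fintype V] (G : SimpleGraph V) : Prop :=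
  ∃ g t : V → ℝ,
    (∀ v, 0 < g v) ∧ (∀ v, 0 < t v) ∧
    ∀ x y : V, x ≠ y →
      (G.Adj x y ↔ min (t x) (t y) ≤ g x + g y)

/-- A finite simple graph is a threshold tolerance graph iff it admits positive
integer-valued weight and tolerance functions witnessing the defining condition. -/
theorem thresholdTolerance_iff_nat_weights {V : Type} [Fintype V] (G : SimpleGraph V) :
    IsThresholdToleranceGraph G ↔
      ∃ g t : V → ℕ,
        (∀ v, 0 < g v) ∧ (∀ v, 0 < t v) ∧
        ∀ x y : V, x ≠ y →
          (G.Adj x y ↔ min (t x) (t y) ≤ g x + g y) := by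
  classical
  constructor
  · rintro ⟨g, t, hg, ht, hadj⟩
    rcases isEmpty_or_nonempty V with hV | hV
    · exact ⟨fun _ => 1, fun _ => 1, fun v => one_pos, fun v => one_pos,
        fun x y _ => (IsEmpty.false x).elim⟩
    -- there is a positive gap δ for all non-adjacent pairs
    obtain ⟨δ, hδpos, hδ⟩ : ∃ δ : ℝ, 0 < δ ∧ ∀ x y, x ≠ y → ¬ G.Adj x y →
        g x + g y + δ ≤ min (t x) (t y) := by
      set s : Finset (V × V) :=
        Finset.univ.filter (fun p => p.1 ≠ p.2 ∧ ¬ G.Adj p.1 p.2) with hs_def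
      by_cases hs : s.Nonempty
      · refine ⟨s.inf' hs (fun p => min (t p.1) (t p.2) - g p.1 - g p.2), ?_, ?_⟩
        · rw [Finset.lt_inf'_iff]
          intro p hp
          simp only [hs_def, Finset.mem_filter, Finset.mem_univ, true_and] at hp
          have h1 : ¬ (min (t p.1) (t p.2) ≤ g p.1 + g p.2) := by
            intro h
            exact hp.2 ((hadj p.1 p.2 hp.1).mpr h)
          push_neg at h1
          linarith
        · intro x y hxy hna
          have hmem : (x, y) ∈ s := by
            simp only [hs_def, Finset.mem_filter, Finset.mem_univ, true_and]
            exact ⟨hxy, hna⟩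
          have := Finset.inf'_le (fun p => min (t p.1) (t p.2) - g p.1 - g p.2) hmem
          linarith
      · refine ⟨1, one_pos, fun x y hxy hna => absurd ?_ hs⟩
        refine ⟨(x, y), ?_⟩
        simp only [hs_def, Finset.mem_filter, Finset.mem_univ, true_and]
        exact ⟨hxy, hna⟩
    -- a positive lower bound on t
    set m : ℝ := Finset.univ.inf' Finset.univ_nonempty t with hm_def
    have hm : 0 < m := by
      rw [hm_def, Finset.lt_inf'_iff]
      exact fun v _ => ht v
    have hmt : ∀ v, m ≤ t v := fun v => Finset.inf'_le t (Finset.mem_univ v)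
    set lam : ℝ := max (3 / δ) (1 / m) with hlam_def
    have hlam : 0 < lam := lt_of_lt_of_le (by positivity) (le_max_right _ _)
    have hlamδ : 3 ≤ lam * δ := by
      have h1 : 3 / δ ≤ lam := le_max_left _ _
      have := mul_le_mul_of_nonneg_right h1 hδpos.le
      rwa [div_mul_cancel₀] at this
      exact hδpos.ne'
    have hlamt : ∀ v, 1 ≤ lam * t v := by
      intro v
      have h1 : 1 / m ≤ lam := le_max_right _ _
      calc (1:ℝ) = (1 / m) * m := by field_simp
        _ ≤ lam * t v := mul_le_mul h1 (hmt v) hm.le hlam.le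
    refine ⟨fun v => ⌈lam * g v⌉₊, fun v => ⌊lam * t v⌋₊, ?_, ?_, ?_⟩
    · intro v
      exact Nat.ceil_pos.mpr (mul_pos hlam (hg v))
    · intro v
      exact Nat.floor_pos.mpr (hlamt v)
    · intro x y hxy
      rw [hadj x y hxy]
      constructor
      · intro h
        rcases le_total (t x) (t y) with hty | hty
        · have hmin : min (t x) (t y) = t x := min_eq_left hty
          rw [hmin] at h
          have h1 : (⌊lam * t x⌋₊ : ℝ) ≤ lam * t x := Nat.floor_le (mul_pos hlam (ht x)).le
          have h2 : lam * g x ≤ (⌈lam * g x⌉₊ : ℝ) := Nat.le_ceil _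
          have h3 : lam * g y ≤ (⌈lam * g y⌉₊ : ℝ) := Nat.le_ceil _
          have h4 : lam * t x ≤ lam * g x + lam * g y := by nlinarith
          have : (min ⌊lam * t x⌋₊ ⌊lam * t y⌋₊ : ℝ) ≤ (⌈lam * g x⌉₊ : ℝ) + ⌈lam * g y⌉₊ := by
            push_cast
            calc (min (⌊lam * t x⌋₊ : ℝ) (⌊lam * t y⌋₊ : ℝ)) ≤ (⌊lam * t x⌋₊ : ℝ) :=
                  min_le_left _ _
              _ ≤ _ := by linarith
          exact_mod_cast this
        · have hmin : min (t x) (t y) = t y := min_eq_right hty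
          rw [hmin] at h
          have h1 : (⌊lam * t y⌋₊ : ℝ) ≤ lam * t y := Nat.floor_le (mul_pos hlam (ht y)).le
          have h2 : lam * g x ≤ (⌈lam * g x⌉₊ : ℝ) := Nat.le_ceil _
          have h3 : lam * g y ≤ (⌈lam * g y⌉₊ : ℝ) := Nat.le_ceil _
          have h4 : lam * t y ≤ lam * g x + lam * g y := by nlinarith
          have : (min ⌊lam * t x⌋₊ ⌊lam * t y⌋₊ : ℝ) ≤ (⌈lam * g x⌉₊ : ℝ) + ⌈lam * g y⌉₊ := by
            push_cast
            calc (min (⌊lam * t x⌋₊ : ℝ) (⌊lam * t y⌋₊ : ℝ)) ≤ (⌊lam * t y⌋₊ : ℝ) :=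
                  min_le_right _ _
              _ ≤ _ := by linarith
          exact_mod_cast this
      · intro h
        by_contra hna
        have hna' : ¬ G.Adj x y := fun ha => hna ((hadj x y hxy).mp ha)
        have hgap := hδ x y hxy hna'
        have h1 : (⌈lam * g x⌉₊ : ℝ) < lam * g x + 1 :=
          Nat.ceil_lt_add_one (mul_pos hlam (hg x)).le
        have h2 : (⌈lam * g y⌉₊ : ℝ) < lam * g y + 1 :=
          Nat.ceil_lt_add_one (mul_pos hlam (hg y)).le
        have h3 : lam * t x - 1 < (⌊lam * t x⌋₊ : ℝ) := Nat.sub_one_lt_floor _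
        have h4 : lam * t y - 1 < (⌊lam * t y⌋₊ : ℝ) := Nat.sub_one_lt_floor _
        have h5 : lam * (g x + g y + δ) ≤ lam * min (t x) (t y) :=
          mul_le_mul_of_nonneg_left hgap hlam.le
        have h6 : min (t x) (t y) ≤ t x := min_le_left _ _
        have h7 : min (t x) (t y) ≤ t y := min_le_right _ _
        have hcast : (min ⌊lam * t x⌋₊ ⌊lam * t y⌋₊ : ℝ) ≤ (⌈lam * g x⌉₊ : ℝ) + ⌈lam * g y⌉₊ := by
          exact_mod_cast h
        rcases min_le_iff.mp hcast with hc | hc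
        · have h8 : lam * (t x ⊓ t y) ≤ lam * t x := mul_le_mul_of_nonneg_left h6 hlam.le
          nlinarith
        · have h8 : lam * (t x ⊓ t y) ≤ lam * t y := mul_le_mul_of_nonneg_left h7 hlam.le
          nlinarith
  · rintro ⟨g, t, hg, ht, hadj⟩
    refine ⟨fun v => (g v : ℝ), fun v => (t v : ℝ), fun v => Nat.cast_pos.mpr (hg v),
      fun v => Nat.cast_pos.mpr (ht v), fun x y hxy => ?_⟩
    rw [hadj x y hxy]
    show _ ↔ ((t x : ℝ) ⊓ (t y : ℝ) ≤ (g x : ℝ) + (g y : ℝ))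
    constructor <;> intro h <;> exact_mod_cast h
end

section
/- Every finite threshold tolerance graph is a pairwise compatibility graph (PCG). (Theorem 3.) -/
/-- `G` is a pairwise compatibility graph: there are a finite tree `T` with nonnegative
edge weights, an injection of the vertices of `G` into the leaves of `T`, and bounds
`0 ≤ dmin ≤ dmax` such that two distinct vertices are adjacent iff the weighted
tree-distance of the corresponding leaves lies in `[dmin, dmax]`. -/
def IsPCG {V : Type} [Fintype V] (G : SimpleGraph V) : Prop :=
  ∃ (n : ℕ) (T : SimpleGraph (Fin n)) (w : Sym2 (Fin n) → ℝ)
      (f : V → Fin n) (dmin dmax : ℝ),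
    T.Connected ∧ T.IsAcyclic ∧
    (∀ e ∈ T.edgeSet, 0 ≤ w e) ∧
    Function.Injective f ∧
    (∀ v : V, ∃! x : Fin n, T.Adj (f v) x) ∧
    0 ≤ dmin ∧ dmin ≤ dmax ∧
    ∀ u v : V, u ≠ v →
      (G.Adj u v ↔ ∃ p : T.Walk (f u) (f v), p.IsPath ∧
        dmin ≤ (p.edges.map w).sum ∧ (p.edges.map w).sum ≤ dmax)

/-!
Sort the vertices so that `t v₀ ≤ t v₁ ≤ ⋯`, and take the caterpillar whose spine is the
path `s₀ s₁ ⋯` with a leaf `ℓᵢ` hanging from each `sᵢ`. Give the tree vertices heights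
`h sᵢ = t vᵢ` and `h ℓᵢ = 2 g vᵢ + D` with `D = ∑ t`, and weight every edge by the height
difference `|h a - h b|`. For `i < j` the path from `ℓᵢ` to `ℓⱼ` climbs monotonically along
the spine, so its length is
`(2 gᵢ + D - tᵢ) + (tⱼ - tᵢ) + (2 gⱼ + D - tⱼ) = 2 (gᵢ + gⱼ) + 2 D - 2 min tᵢ tⱼ`.
This is at least `2 D` exactly when `vᵢ vⱼ` is an edge, and it never exceeds `2 D + 2 ∑ g`.
-/

namespace SimpleGraph

variable {V : Type*} {G : SimpleGraph V}

/-- On a cycle, a vertex that is maximal on it has two distinct smaller neighbours. -/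
theorem isAcyclic_of_lt_adj_unique [LinearOrder V]
    (h : ∀ v a b, G.Adj v a → G.Adj v b → a < v → b < v → a = b) : G.IsAcyclic := by
  intro v c hc
  obtain ⟨m, hm, hmax⟩ := c.support.toFinset.exists_max_image id ⟨v, by simp⟩
  rw [List.mem_toFinset] at hm
  have hc' : (c.rotate m hm).IsCycle := hc.rotate hm
  have hlt : ∀ x, G.Adj m x → x ∈ (c.rotate m hm).support → x < m := fun x hx hxs =>
    lt_of_le_of_ne (hmax x (List.mem_toFinset.mpr ((c.mem_support_rotate_iff m hm).mp hxs)))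
      hx.ne.symm
  have hsnd := Walk.adj_snd hc'.not_nil
  have hpen := (Walk.adj_penultimate hc'.not_nil).symm
  exact hc'.snd_ne_penultimate <| h m _ _ hsnd hpen
    (hlt _ hsnd (Walk.getVert_mem_support _ _)) (hlt _ hpen (Walk.getVert_mem_support _ _))

theorem reachable_of_exists_lt_adj [Preorder V] [WellFoundedLT V] {r : V}
    (h : ∀ v ≠ r, ∃ u < v, G.Adj v u) (v : V) : G.Reachable v r := by
  induction v using WellFoundedLT.induction with
  | _ v ih =>
    by_cases hv : v = r
    · exact hv ▸ Reachable.refl v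
    · obtain ⟨u, hu, hvu⟩ := h v hv
      exact hvu.reachable.trans (ih u hu)

theorem IsAcyclic.exists_isPath_and_iff (hG : G.IsAcyclic) {u v : V} {q : G.Walk u v}
    (hq : q.IsPath) (P : G.Walk u v → Prop) : (∃ p : G.Walk u v, p.IsPath ∧ P p) ↔ P q := by
  refine ⟨fun ⟨p, hp, hP⟩ => ?_, fun hP => ⟨q, hq, hP⟩⟩
  obtain rfl : p = q := congrArg Subtype.val ((hG.subsingleton_path u v).elim ⟨p, hp⟩ ⟨q, hq⟩)
  exact hP

end SimpleGraph

open SimpleGraph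

def potentialWeight {V : Type*} (h : V → ℝ) : Sym2 V → ℝ :=
  Sym2.lift ⟨fun a b => |h a - h b|, fun _ _ => abs_sub_comm _ _⟩

@[simp]
theorem potentialWeight_mk {V : Type*} (h : V → ℝ) (a b : V) :
    potentialWeight h s(a, b) = |h a - h b| :=
  rfl

theorem potentialWeight_nonneg {V : Type*} (h : V → ℝ) (e : Sym2 V) :
    0 ≤ potentialWeight h e :=
  e.ind fun _ _ => abs_nonneg _

/-- The spine `0, 1, …, n - 1` is a path; the leaf `n + i` hangs from the spine vertex `i`. -/
def caterpillar (n : ℕ) : SimpleGraph (Fin (n + n)) :=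
  fromRel fun a b => (b.val = a.val + 1 ∧ b.val < n) ∨ b.val = a.val + n

namespace caterpillar

variable {n : ℕ}

theorem adj_iff {a b : Fin (n + n)} : (caterpillar n).Adj a b ↔
    (b.val = a.val + 1 ∧ b.val < n) ∨ b.val = a.val + n ∨
      (a.val = b.val + 1 ∧ a.val < n) ∨ a.val = b.val + n := by
  rw [caterpillar, fromRel_adj, ne_eq, Fin.ext_iff]
  constructor
  · rintro ⟨-, h⟩; omega
  · intro h; constructor <;> omega

theorem connected (hn : 0 < n) : (caterpillar n).Connected := by
  refine (connected_iff_exists_forall_reachable _).mpr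
    ⟨⟨0, by omega⟩, fun v => (reachable_of_exists_lt_adj (fun v hv => ?_) v).symm⟩
  replace hv : v.val ≠ 0 := fun h => hv (Fin.ext h)
  by_cases hvn : v.val < n
  · exact ⟨⟨v.val - 1, by omega⟩, Fin.mk_lt_of_lt_val (by omega), adj_iff.mpr (by simp only; omega)⟩
  · exact ⟨⟨v.val - n, by omega⟩, Fin.mk_lt_of_lt_val (by omega), adj_iff.mpr (by simp only; omega)⟩

theorem isAcyclic : (caterpillar n).IsAcyclic :=
  isAcyclic_of_lt_adj_unique fun v a b hva hvb hav hbv => by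
    rw [adj_iff] at hva hvb
    rw [Fin.lt_def] at hav hbv
    exact Fin.ext (by omega)

theorem existsUnique_adj_leaf (i : Fin n) : ∃! x, (caterpillar n).Adj (Fin.natAdd n i) x :=
  ⟨Fin.castAdd n i, adj_iff.mpr (by simp), fun x (hx : (caterpillar n).Adj _ x) => by
    rw [adj_iff, Fin.val_natAdd] at hx
    exact Fin.ext (by rw [Fin.val_castAdd]; omega)⟩

section paths

variable (h : Fin (n + n) → ℝ)

theorem exists_spine_path (hh : Monotone (h ∘ Fin.castAdd n)) (i d : ℕ) (hid : i + d < n) :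
    ∃ p : (caterpillar n).Walk ⟨i, by omega⟩ ⟨i + d, by omega⟩, p.IsPath ∧
      (∀ x ∈ p.support, x.val ≤ i + d) ∧
      (p.edges.map (potentialWeight h)).sum = h ⟨i + d, by omega⟩ - h ⟨i, by omega⟩ := by
  induction d with
  | zero => exact ⟨Walk.nil, Walk.IsPath.nil, by simp, by simp⟩
  | succ d ih =>
    obtain ⟨p, hp, hsupp, hsum⟩ := ih (by omega)
    have hadj : (caterpillar n).Adj ⟨i + d, by omega⟩ ⟨i + (d + 1), by omega⟩ :=
      adj_iff.mpr (by simp only; omega)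
    have hmono : h ⟨i + d, by omega⟩ ≤ h ⟨i + (d + 1), by omega⟩ :=
      hh (show (⟨i + d, by omega⟩ : Fin n) ≤ ⟨i + (d + 1), hid⟩ from Fin.mk_le_mk.mpr (by omega))
    refine ⟨p.concat hadj, hp.concat (fun hmem => by simpa using hsupp _ hmem) hadj,
      fun x hx => ?_, ?_⟩
    · rw [Walk.support_concat, List.mem_append, List.mem_singleton] at hx
      rcases hx with hx | rfl
      · exact (hsupp x hx).trans (by omega)
      · exact le_rfl
    · rw [Walk.edges_concat, List.map_concat, List.sum_concat, hsum, potentialWeight_mk,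
        abs_sub_comm, abs_of_nonneg (sub_nonneg.mpr hmono)]
      ring

theorem exists_leaf_path_of_lt (hh : Monotone (h ∘ Fin.castAdd n)) {i j : Fin n}
    (hij : i < j) :
    ∃ p : (caterpillar n).Walk (Fin.natAdd n i) (Fin.natAdd n j), p.IsPath ∧
      (p.edges.map (potentialWeight h)).sum = |h (Fin.natAdd n i) - h (Fin.castAdd n i)| +
        |h (Fin.castAdd n i) - h (Fin.castAdd n j)| +
          |h (Fin.castAdd n j) - h (Fin.natAdd n j)| := by
  obtain ⟨i, hi⟩ := i
  obtain ⟨j, hj⟩ := j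
  have hij : i < j := Fin.mk_lt_mk.mp hij
  obtain ⟨d, rfl⟩ := Nat.exists_eq_add_of_le hij.le
  obtain ⟨q, hq, hsupp, hsum⟩ := exists_spine_path h hh i d hj
  have hleaf_i : (caterpillar n).Adj (Fin.natAdd n ⟨i, hi⟩) ⟨i, by omega⟩ :=
    adj_iff.mpr (by simp)
  have hleaf_j : (caterpillar n).Adj ⟨i + d, by omega⟩ (Fin.natAdd n ⟨i + d, hj⟩) :=
    adj_iff.mpr (by simp)
  have hmono : h (Fin.castAdd n ⟨i, hi⟩) ≤ h (Fin.castAdd n ⟨i + d, hj⟩) :=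
    hh (Fin.mk_le_mk.mpr (by omega))
  refine ⟨.cons hleaf_i (q.concat hleaf_j), ?_, ?_⟩
  · refine (hq.concat (fun hmem => ?_) hleaf_j).cons fun hmem => ?_
    · have := hsupp _ hmem
      rw [Fin.val_natAdd] at this
      omega
    · rw [Walk.support_concat, List.mem_append, List.mem_singleton] at hmem
      rcases hmem with hmem | hmem
      · have := hsupp _ hmem
        rw [Fin.val_natAdd] at this
        omega
      · rw [Fin.ext_iff, Fin.val_natAdd, Fin.val_natAdd] at hmem
        omega
  · rw [Walk.edges_cons, Walk.edges_concat, List.map_cons, List.map_concat, List.sum_cons,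
      List.sum_concat, hsum, potentialWeight_mk, potentialWeight_mk,
      abs_sub_comm (h (Fin.castAdd n _)), abs_of_nonneg (sub_nonneg.mpr hmono)]
    exact (add_assoc _ _ _).symm

theorem exists_leaf_path (hh : Monotone (h ∘ Fin.castAdd n)) {i j : Fin n} (hij : i ≠ j) :
    ∃ p : (caterpillar n).Walk (Fin.natAdd n i) (Fin.natAdd n j), p.IsPath ∧
      (p.edges.map (potentialWeight h)).sum = |h (Fin.natAdd n i) - h (Fin.castAdd n i)| +
        |h (Fin.castAdd n i) - h (Fin.castAdd n j)| +
          |h (Fin.castAdd n j) - h (Fin.natAdd n j)| := by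
  rcases hij.lt_or_gt with hlt | hgt
  · exact exists_leaf_path_of_lt h hh hlt
  · obtain ⟨p, hp, hsum⟩ := exists_leaf_path_of_lt h hh hgt
    refine ⟨p.reverse, hp.reverse, ?_⟩
    rw [Walk.edges_reverse, List.map_reverse, List.sum_reverse, hsum,
      abs_sub_comm (h (Fin.castAdd n i)) (h (Fin.natAdd n i)),
      abs_sub_comm (h (Fin.castAdd n j)) (h (Fin.castAdd n i)),
      abs_sub_comm (h (Fin.castAdd n j)) (h (Fin.natAdd n j))]
    ring

end paths

end caterpillar

theorem Fintype.exists_equivFin_monotone {V α : Type*} [Fintype V] [LinearOrder α]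
    (f : V → α) : ∃ e : Fin (Fintype.card V) ≃ V, Monotone (f ∘ e) :=
  ⟨(Tuple.sort (f ∘ (Fintype.equivFin V).symm)).trans (Fintype.equivFin V).symm,
    by simpa only [Equiv.coe_trans, Function.comp_assoc] using
      Tuple.monotone_sort (f ∘ (Fintype.equivFin V).symm)⟩

theorem min_le_add_iff_abs_sum_mem {a b x y D M : ℝ} (ha : 0 < a) (hb : 0 < b) (haD : a ≤ D)
    (hbD : b ≤ D) (hx : 0 < x) (hy : 0 < y) (hxy : x + y ≤ M) :
    min a b ≤ x + y ↔ 2 * D ≤ |2 * x + D - a| + |a - b| + |b - (2 * y + D)| ∧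
      |2 * x + D - a| + |a - b| + |b - (2 * y + D)| ≤ 2 * D + 2 * M := by
  have hsum : |2 * x + D - a| + |a - b| + |b - (2 * y + D)| =
      2 * (x + y) + 2 * D - 2 * min a b := by
    rw [abs_of_nonneg (by linarith : 0 ≤ 2 * x + D - a),
      abs_of_nonpos (by linarith : b - (2 * y + D) ≤ 0), abs_sub_comm, ← max_sub_min_eq_abs]
    linarith [min_add_max a b]
  rw [hsum]
  have hmin : 0 < min a b := lt_min ha hb
  constructor
  · intro h; constructor <;> linarith
  · intro h; linarith [h.1]

theorem isPCG_of_isEmpty {V : Type} [Fintype V] [IsEmpty V] (G : SimpleGraph V) : IsPCG G :=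
  ⟨1, ⊥, 0, isEmptyElim, 0, 0, .of_subsingleton, isAcyclic_bot, fun _ _ => le_rfl,
    Function.injective_of_subsingleton _, isEmptyElim, le_rfl, le_rfl, isEmptyElim⟩

/-- Every finite threshold tolerance graph is a pairwise compatibility graph. -/
theorem thresholdTolerance_isPCG {V : Type} [Fintype V] (G : SimpleGraph V)
    (hG : IsThresholdToleranceGraph G) : IsPCG G := by
  obtain ⟨g, t, hg, ht, hGt⟩ := hG
  rcases isEmpty_or_nonempty V with hV | hV
  · exact isPCG_of_isEmpty G
  obtain ⟨e, he⟩ := Fintype.exists_equivFin_monotone t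
  set D := ∑ v, t v
  set M := ∑ v, g v
  set h : Fin (Fintype.card V + Fintype.card V) → ℝ :=
    Fin.addCases (fun i => t (e i)) (fun i => 2 * g (e i) + D)
  have hh : Monotone (h ∘ Fin.castAdd _) := by simpa [h, Function.comp_def] using he
  have hD : 0 ≤ D := Finset.sum_nonneg fun v _ => (ht v).le
  have hM : 0 ≤ M := Finset.sum_nonneg fun v _ => (hg v).le
  have htD : ∀ v, t v ≤ D := fun v =>
    Finset.single_le_sum (fun v _ => (ht v).le) (Finset.mem_univ v)
  refine ⟨_, caterpillar _, potentialWeight h, fun v => Fin.natAdd _ (e.symm v), 2 * D,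
    2 * D + 2 * M, caterpillar.connected Fintype.card_pos, caterpillar.isAcyclic,
    fun e _ => potentialWeight_nonneg h e, (Fin.natAdd_injective _ _).comp e.symm.injective,
    fun v => caterpillar.existsUnique_adj_leaf _, by linarith, by linarith, fun u v huv => ?_⟩
  obtain ⟨p, hp, hsum⟩ := caterpillar.exists_leaf_path h hh (e.symm.injective.ne huv)
  rw [caterpillar.isAcyclic.exists_isPath_and_iff hp (fun p => _ ≤ _ ∧ _ ≤ _), hsum, hGt u v huv]
  simp only [h, Fin.addCases_left, Fin.addCases_right, Equiv.apply_symm_apply]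
  exact min_le_add_iff_abs_sum_mem (ht u) (ht v) (htD u) (htD v) (hg u) (hg v)
    (Finset.add_le_sum (fun v _ => (hg v).le) (Finset.mem_univ u) (Finset.mem_univ v) huv)
end

section
/- The graph H is a disk graph: there exist closed balls of positive radius D_1, …, D_8 in the Euclidean plane ℝ² such that for all distinct i,j ∈ {1,…,8}, {i,j} is an edge of H if and only if D_i ∩ D_j ≠ ∅. (Claim witnessed by Figure 1.b.) -/
/-- The graph `H` on eight vertices (here `0, …, 7` standing for `1, …, 8`): the four
edges `{1,2}, {3,4}, {5,6}, {7,8}` together with all sixteen pairs `{a, b}` with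
`a ∈ {3,4,5,6}` and `b ∈ {1,2,7,8}`. -/
def graphH : SimpleGraph (Fin 8) :=
  SimpleGraph.fromRel (fun a b =>
    (a = 0 ∧ b = 1) ∨ (a = 2 ∧ b = 3) ∨ (a = 4 ∧ b = 5) ∨ (a = 6 ∧ b = 7) ∨
    (a ∈ ({2, 3, 4, 5} : Set (Fin 8)) ∧ b ∈ ({0, 1, 6, 7} : Set (Fin 8))))

/-- `G` is a disk graph: vertices are represented by closed balls of positive radius in
the Euclidean plane, and two distinct vertices are adjacent iff their balls intersect. -/
def IsDiskGraph {V : Type} [Fintype V] (G : SimpleGraph V) : Prop :=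
  ∃ (c : V → EuclideanSpace ℝ (Fin 2)) (r : V → ℝ),
    (∀ v, 0 < r v) ∧
    ∀ u v : V, u ≠ v →
      (G.Adj u v ↔
        (Metric.closedBall (c u) (r u) ∩ Metric.closedBall (c v) (r v)).Nonempty)

/-- The point `(a, b)` of the Euclidean plane. -/
noncomputable def pt (a b : ℝ) : EuclideanSpace ℝ (Fin 2) :=
  (WithLp.equiv 2 (Fin 2 → ℝ)).symm ![a, b]

lemma pt_dist (a b a' b' : ℝ) :
    dist (pt a b) (pt a' b') = Real.sqrt ((a - a') ^ 2 + (b - b') ^ 2) := by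
  rw [EuclideanSpace.dist_eq]
  simp [pt, Fin.sum_univ_two, Real.dist_eq, sq_abs]

lemma pt_dist_le_iff (a b a' b' : ℝ) :
    dist (pt a b) (pt a' b') ≤ 6/5 ↔ (a - a') ^ 2 + (b - b') ^ 2 ≤ (6/5) ^ 2 := by
  rw [pt_dist, Real.sqrt_le_left (by norm_num)]

/-- Two closed balls of radius `3/5` intersect iff their centers are at distance `≤ 6/5`. -/
lemma ball_inter_iff (x y : EuclideanSpace ℝ (Fin 2)) :
    (Metric.closedBall x (3/5) ∩ Metric.closedBall y (3/5)).Nonempty ↔ dist x y ≤ 6/5 := by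
  constructor
  · intro h
    have := Metric.dist_le_add_of_nonempty_closedBall_inter_closedBall h
    linarith
  · intro h
    have h2 : ‖(2 : ℝ)‖⁻¹ = 1/2 := by norm_num
    refine ⟨midpoint ℝ x y, ?_, ?_⟩
    · rw [Metric.mem_closedBall, dist_midpoint_left, h2]
      linarith [dist_nonneg (x := x) (y := y)]
    · rw [Metric.mem_closedBall, dist_midpoint_right, h2]
      linarith [dist_nonneg (x := x) (y := y)]

/-- Centers of the eight disks: pairs `{0,1}, {2,3}, {4,5}, {6,7}` sit at the four corners
of the unit square (both disks of a pair at the same corner), with adjacent corners used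
for adjacent pairs. -/
noncomputable def ctr : Fin 8 → EuclideanSpace ℝ (Fin 2)
  | 0 => pt 0 0
  | 1 => pt 0 0
  | 2 => pt 1 0
  | 3 => pt 1 0
  | 4 => pt 0 1
  | 5 => pt 0 1
  | 6 => pt 1 1
  | 7 => pt 1 1

/-- The graph `H` is a disk graph (claim witnessed by Figure 1.b). -/
theorem graphH_isDiskGraph : IsDiskGraph graphH := by
  refine ⟨ctr, fun _ => 3/5, fun _ => by norm_num, ?_⟩
  intro u v huv
  rw [ball_inter_iff]
  fin_cases u <;> fin_cases v <;>
    simp only [graphH, SimpleGraph.fromRel_adj, ctr, pt_dist_le_iff, Set.mem_insert_iff,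
      Set.mem_singleton_iff] <;> norm_num <;>
    first | exact (huv rfl).elim | decide
end

section
/- The graph H is a circular arc graph: there exist real numbers a_i ≤ b_i for i ∈ {1,…,8} such that, writing A_i = {(cos θ, sin θ) : a_i ≤ θ ≤ b_i} for the corresponding closed arcs of the unit circle in ℝ², for all distinct i,j ∈ {1,…,8}, {i,j} is an edge of H if and only if A_i ∩ A_j ≠ ∅. (Claim witnessed by Figure 2.a.) -/
/-- The closed arc `{(cos θ, sin θ) : a ≤ θ ≤ b}` of the unit circle. -/
def circArc (a b : ℝ) : Set (ℝ × ℝ) :=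
  (fun θ : ℝ => (Real.cos θ, Real.sin θ)) '' Set.Icc a b

/-- `G` is a circular arc graph: vertices are represented by closed arcs of the unit
circle, and two distinct vertices are adjacent iff their arcs intersect. -/
def IsCircularArcGraph {V : Type} [Fintype V] (G : SimpleGraph V) : Prop :=
  ∃ a b : V → ℝ,
    (∀ v, a v ≤ b v) ∧
    ∀ u v : V, u ≠ v →
      (G.Adj u v ↔ (circArc (a u) (b u) ∩ circArc (a v) (b v)).Nonempty)

open Real
lemma angle_eq_of_cos_sin {x y : ℝ} (hc : Real.cos x = Real.cos y)
    (hs : Real.sin x = Real.sin y) : ∃ k : ℤ, x = y + 2 * π * k := by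
  have hexp : Complex.exp (x * Complex.I) = Complex.exp (y * Complex.I) := by
    rw [Complex.exp_mul_I, Complex.exp_mul_I, ← Complex.ofReal_cos, ← Complex.ofReal_cos,
      ← Complex.ofReal_sin, ← Complex.ofReal_sin, hc, hs]
  obtain ⟨n, hn⟩ := Complex.exp_eq_exp_iff_exists_int.mp hexp
  refine ⟨n, ?_⟩
  have h2 : (x : ℂ) * Complex.I = (y + 2 * π * n : ℝ) * Complex.I := by
    rw [hn]; push_cast; ring
  exact_mod_cast mul_right_cancel₀ Complex.I_ne_zero h2

lemma mem_circArc {a b θ : ℝ} (h1 : a ≤ θ) (h2 : θ ≤ b) :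
    (Real.cos θ, Real.sin θ) ∈ circArc a b := ⟨θ, ⟨h1, h2⟩, rfl⟩

/-- overlapping intervals give intersecting arcs -/
lemma arcs_overlap {a1 b1 a2 b2 : ℝ} (h1 : a1 ≤ b1) (h2 : a2 ≤ b2) (h3 : a2 ≤ b1)
    (h4 : a1 ≤ b2) : (circArc a1 b1 ∩ circArc a2 b2).Nonempty := by
  refine ⟨(Real.cos (max a1 a2), Real.sin (max a1 a2)), mem_circArc (le_max_left _ _) ?_,
    mem_circArc (le_max_right _ _) ?_⟩ <;> simp [max_le_iff] <;> constructor <;> linarith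

/-- wrap-around intersection: second interval reaches the first shifted by 2π -/
lemma arcs_wrap {a1 b1 a2 b2 : ℝ} (h1 : a1 ≤ b1) (h2 : a2 ≤ b2) (h3 : a2 ≤ b1 + 2 * π)
    (h4 : a1 + 2 * π ≤ b2) : (circArc a1 b1 ∩ circArc a2 b2).Nonempty := by
  set θ := max a1 (a2 - 2 * π) with hθ
  refine ⟨(Real.cos θ, Real.sin θ), mem_circArc (le_max_left _ _) ?_, ⟨θ + 2 * π, ⟨?_, ?_⟩, ?_⟩⟩
  · simp [hθ, max_le_iff]; constructor <;> linarith
  · have := le_max_right a1 (a2 - 2 * π); linarith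
  · have h7 : θ ≤ b2 - 2 * π := max_le (by linarith) (by linarith)
    linarith
  · simp [Real.cos_add_two_pi, Real.sin_add_two_pi]

lemma arcs_wrap' {a1 b1 a2 b2 : ℝ} (h1 : a2 ≤ b2) (h2 : a1 ≤ b1) (h3 : a1 ≤ b2 + 2 * π)
    (h4 : a2 + 2 * π ≤ b1) : (circArc a1 b1 ∩ circArc a2 b2).Nonempty := by
  rw [Set.inter_comm]; exact arcs_wrap h1 h2 h3 h4

/-- disjoint intervals (within a 2π window) give disjoint arcs -/
lemma arcs_disj {a1 b1 a2 b2 : ℝ} (h1 : b1 < a2) (h2 : b2 - a1 < 2 * π) :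
    ¬ (circArc a1 b1 ∩ circArc a2 b2).Nonempty := by
  rintro ⟨p, ⟨θ1, ⟨ha1, hb1⟩, rfl⟩, ⟨θ2, ⟨ha2, hb2⟩, hp⟩⟩
  have hc : Real.cos θ1 = Real.cos θ2 := congrArg Prod.fst hp.symm
  have hs : Real.sin θ1 = Real.sin θ2 := congrArg Prod.snd hp.symm
  obtain ⟨k, hk⟩ := angle_eq_of_cos_sin hc hs
  have hpi := Real.pi_pos
  have hneg : (k : ℝ) < 0 := by nlinarith
  have hk1 : k < 0 := by exact_mod_cast hneg
  have : (k : ℝ) ≤ -1 := by exact_mod_cast (by omega : k ≤ -1)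
  nlinarith

lemma arcs_disj' {a1 b1 a2 b2 : ℝ} (h1 : b2 < a1) (h2 : b1 - a2 < 2 * π) :
    ¬ (circArc a1 b1 ∩ circArc a2 b2).Nonempty := by
  rw [Set.inter_comm]; exact arcs_disj h1 h2

noncomputable def arcA : Fin 8 → ℝ
  | 0 => 0 | 1 => 0.5 | 2 => 0.8 | 3 => 0.9 | 4 => 3.9 | 5 => 3.95 | 6 => 3.4 | 7 => 3.5

noncomputable def arcB : Fin 8 → ℝ
  | 0 => 1 | 1 => 1.5 | 2 => 3.5 | 3 => 3.6 | 4 => 2 * π + 0.6 | 5 => 2 * π + 0.7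
  | 6 => 4 | 7 => 4.1

set_option maxHeartbeats 2000000 in
/-- The graph `H` is a circular arc graph (claim witnessed by Figure 2.a). -/
theorem graphH_isCircularArcGraph : IsCircularArcGraph graphH := by
  have hpi3 := Real.pi_gt_three
  have hpi4 := Real.pi_lt_d2
  refine ⟨arcA, arcB, ?_, ?_⟩
  · intro v
    fin_cases v <;> simp only [arcA, arcB] <;> linarith
  · intro u v huv
    fin_cases u <;> fin_cases v <;>
      simp only [arcA, arcB] <;>
      first
      | exact absurd rfl huv
      | exact iff_of_true
          (by simp only [graphH, SimpleGraph.fromRel_adj, Set.mem_insert_iff,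
              Set.mem_singleton_iff]; decide)
          (arcs_overlap (by linarith) (by linarith) (by linarith) (by linarith))
      | exact iff_of_true
          (by simp only [graphH, SimpleGraph.fromRel_adj, Set.mem_insert_iff,
              Set.mem_singleton_iff]; decide)
          (arcs_wrap (by linarith) (by linarith) (by linarith) (by linarith))
      | exact iff_of_true
          (by simp only [graphH, SimpleGraph.fromRel_adj, Set.mem_insert_iff,
              Set.mem_singleton_iff]; decide)
          (arcs_wrap' (by linarith) (by linarith) (by linarith) (by linarith))
      | exact iff_of_false
          (by simp only [graphH, SimpleGraph.fromRel_adj, Set.mem_insert_iff,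
              Set.mem_singleton_iff]; decide)
          (arcs_disj (by linarith) (by linarith))
      | exact iff_of_false
          (by simp only [graphH, SimpleGraph.fromRel_adj, Set.mem_insert_iff,
              Set.mem_singleton_iff]; decide)
          (arcs_disj' (by linarith) (by linarith))
end

section
/- The graph H is a square intersection graph: there exist axis-parallel closed squares Q_1, …, Q_8 in ℝ², where each Q_i = [x_i, x_i + s_i] × [y_i, y_i + s_i] with s_i > 0, such that for all distinct i,j ∈ {1,…,8}, {i,j} is an edge of H if and only if Q_i ∩ Q_j ≠ ∅. (Claim witnessed by Figure 2.b.) -/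
/-- `G` is a square intersection graph: vertices are represented by axis-parallel closed
squares `[x, x+s] × [y, y+s]` with `s > 0` in the plane, and two distinct vertices are
adjacent iff their squares intersect. -/
def IsSquareIntersectionGraph {V : Type} [Fintype V] (G : SimpleGraph V) : Prop :=
  ∃ x y s : V → ℝ,
    (∀ v, 0 < s v) ∧
    ∀ u v : V, u ≠ v →
      (G.Adj u v ↔
        ((Set.Icc (x u) (x u + s u) ×ˢ Set.Icc (y u) (y u + s u)) ∩
          (Set.Icc (x v) (x v + s v) ×ˢ Set.Icc (y v) (y v + s v))).Nonempty)

set_option maxHeartbeats 4000000 in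
/-- The graph `H` is a square intersection graph (claim witnessed by Figure 2.b). -/
theorem graphH_isSquareIntersectionGraph : IsSquareIntersectionGraph graphH := by
  refine ⟨![0, 1, 5, 6, 5, 6, 20, 21], ![0, 0, 10, 10, -20, -20, 0, 0],
    ![10, 10, 20, 20, 20, 20, 10, 10], ?_, ?_⟩
  · intro v; fin_cases v <;> norm_num
  · intro u v huv
    rw [Set.prod_inter_prod, Set.prod_nonempty_iff, Set.Icc_inter_Icc, Set.Icc_inter_Icc,
      Set.nonempty_Icc, Set.nonempty_Icc]
    fin_cases u <;> fin_cases v <;>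
      simp only [graphH, SimpleGraph.fromRel_adj, Matrix.cons_val_zero, Matrix.cons_val_one,
        Matrix.head_cons, Matrix.cons_val_succ] <;>
      norm_num [Fin.ext_iff] <;>
      first
        | exact absurd rfl huv
        | decide
end

section
/- The graph H is a tolerance graph: there exist closed intervals I_1, …, I_8 on the real line and positive tolerances t_1, …, t_8 such that for all distinct i,j ∈ {1,…,8}, {i,j} is an edge of H if and only if |I_i ∩ I_j| ≥ min(t_i, t_j), where |J| denotes the length (measure) of J, with |J| = 0 if J is empty. (The claim underlying Theorem 2.) -/
/-- `G` is a tolerance graph: each vertex gets a closed interval `[a, b]` and a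
tolerance `t > 0`, and two distinct vertices are adjacent iff the length of the
intersection of their intervals is at least the minimum of their tolerances. -/
def IsToleranceGraph {V : Type} [Fintype V] (G : SimpleGraph V) : Prop :=
  ∃ a b t : V → ℝ,
    (∀ v, a v ≤ b v) ∧ (∀ v, 0 < t v) ∧
    ∀ u v : V, u ≠ v →
      (G.Adj u v ↔
        min (t u) (t v) ≤
          (MeasureTheory.volume (Set.Icc (a u) (b u) ∩ Set.Icc (a v) (b v))).toReal)

set_option maxHeartbeats 2000000 in
lemma vol_Icc_inter (p q r s : ℝ) :
    (MeasureTheory.volume (Set.Icc p q ∩ Set.Icc r s)).toReal = max (min q s - max p r) 0 := by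
  rw [Set.Icc_inter_Icc, Real.volume_Icc]
  rcases le_total 0 (min q s - max p r) with h | h
  · rw [ENNReal.toReal_ofReal h, max_eq_left h]
  · rw [ENNReal.ofReal_eq_zero.mpr h, max_eq_right h, ENNReal.toReal_zero]

set_option maxHeartbeats 2000000 in
/-- The graph `H` is a tolerance graph (the claim underlying Theorem 2). -/
theorem graphH_isToleranceGraph : IsToleranceGraph graphH := by
  refine ⟨![1,1,0,1,100,101,0,0], ![103,103,2,3,102,103,102,102],
    ![102,102,1,1,1,1,102,102], ?_, ?_, ?_⟩
  · intro v; fin_cases v <;> norm_num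
  · intro v; fin_cases v <;> norm_num
  · intro u v huv
    fin_cases u <;> fin_cases v <;>
      first
        | exact absurd rfl huv
        | (norm_num [graphH, SimpleGraph.fromRel_adj, Set.mem_insert_iff,
             Set.mem_singleton_iff, vol_Icc_inter] <;> decide)
end
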